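/- If X_n ~ Bin(n, p_n) and n·p_n → ∞, then for any fixed b > 0 and α > 0, E[1/(b + X_n)^α] = (1 + o(1))/(n·p_n)^α as n → ∞. -/

import Mathlib

/-!
Write `M = n p`. Since `t ↦ t ^ (-α)` is convex, Jensen's inequality gives
`E[(b + X)^(-α)] ≥ (b + M)^(-α)`, which is the lower bound.

For the upper bound, Lyapunov's inequality reduces to an integer exponent `m ≥ α`. Ascending
factorial moments are explicit: re-indexing against `Bin(n + m, p)` gives
`E[1 / ((X + 1) ⋯ (X + m))] ≤ M^(-m)`. Above a threshold `K`, `(b + X)^(-m)` is at most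
`(1 + m/K)^m / ((X + 1) ⋯ (X + m))`; below `K`, Markov's inequality for the factorial moment of
order `2m + 1` shows that `X < K` has probability at most `((K + 2m + 1) / M)^(2m + 1)`.
With `K = √M` both error terms vanish as `M → ∞`.
-/

open MeasureTheory Filter
open scoped ENNReal

/-- `μ` is the distribution of a `Bin(n, p)` random variable: a probability measure on `ℕ`
with `μ {k} = C(n,k) p^k (1-p)^(n-k)`. -/
def IsBinomial (μ : Measure ℕ) (n : ℕ) (p : ℝ) : Prop :=
  IsProbabilityMeasure μ ∧
    ∀ k : ℕ, μ {k} = ENNReal.ofReal ((n.choose k : ℝ) * p ^ k * (1 - p) ^ (n - k))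

open Finset

lemma Nat.choose_mul_ascFactorial (n m k : ℕ) :
    n.choose k * (n + 1).ascFactorial m = (n + m).choose (k + m) * (k + 1).ascFactorial m := by
  have h := Nat.choose_mul (n := n + m) (k := k + m) (s := m) (by omega)
  simp only [Nat.add_sub_cancel] at h
  rw [Nat.ascFactorial_eq_factorial_mul_choose, Nat.ascFactorial_eq_factorial_mul_choose]
  calc n.choose k * (m.factorial * (n + m).choose m)
      = m.factorial * ((n + m).choose m * n.choose k) := by ring
    _ = (n + m).choose (k + m) * (m.factorial * (k + m).choose m) := by rw [← h]; ring

noncomputable def binomialWeight (n : ℕ) (p : ℝ) (k : ℕ) : ℝ :=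
  n.choose k * p ^ k * (1 - p) ^ (n - k)

section BinomialWeight

variable {n : ℕ} {p : ℝ}

lemma binomialWeight_nonneg (hp₀ : 0 ≤ p) (hp₁ : p ≤ 1) (k : ℕ) : 0 ≤ binomialWeight n p k := by
  unfold binomialWeight
  have : 0 ≤ 1 - p := sub_nonneg.2 hp₁
  positivity

lemma sum_binomialWeight (n : ℕ) (p : ℝ) : ∑ k ∈ range (n + 1), binomialWeight n p k = 1 := by
  simpa [binomialWeight, mul_comm, mul_left_comm, mul_assoc] using (add_pow p (1 - p) n).symm

lemma sum_binomialWeight_mul_self (n : ℕ) (p : ℝ) :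
    ∑ k ∈ range (n + 1), binomialWeight n p k * k = n * p := by
  simpa [Polynomial.eval_finsetSum, bernsteinPolynomial, binomialWeight, mul_comm] using
    congrArg (Polynomial.eval p) (bernsteinPolynomial.sum_smul (R := ℝ) n)

lemma binomialWeight_mul_pow_mul_ascFactorial (n m k : ℕ) (p : ℝ) :
    binomialWeight n p k * p ^ m * (n + 1).ascFactorial m
      = binomialWeight (n + m) p (k + m) * (k + 1).ascFactorial m := by
  have h : (n.choose k * (n + 1).ascFactorial m : ℝ)
      = (n + m).choose (k + m) * (k + 1).ascFactorial m := by
    exact_mod_cast Nat.choose_mul_ascFactorial n m k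
  rw [binomialWeight, binomialWeight, show n + m - (k + m) = n - k by omega, pow_add]
  linear_combination p ^ k * p ^ m * (1 - p) ^ (n - k) * h

lemma sum_binomialWeight_add_le (hp₀ : 0 ≤ p) (hp₁ : p ≤ 1) (m : ℕ) :
    ∑ k ∈ range (n + 1), binomialWeight (n + m) p (k + m) ≤ 1 := by
  have h := sum_binomialWeight (n + m) p
  rw [show n + m + 1 = m + (n + 1) by omega, sum_range_add] at h
  have : 0 ≤ ∑ k ∈ range m, binomialWeight (n + m) p k :=
    sum_nonneg fun k _ ↦ binomialWeight_nonneg hp₀ hp₁ k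
  simp only [add_comm m] at h
  linarith

lemma pow_mul_sum_binomialWeight_div_ascFactorial_le (hp₀ : 0 ≤ p) (hp₁ : p ≤ 1) (m : ℕ) :
    (n * p) ^ m * ∑ k ∈ range (n + 1), binomialWeight n p k / (k + 1).ascFactorial m ≤ 1 := by
  have hasc : ∀ j : ℕ, (0 : ℝ) < (j + 1).ascFactorial m := fun j ↦ by
    exact_mod_cast Nat.ascFactorial_pos j m
  have hpow : (n : ℝ) ^ m ≤ (n + 1).ascFactorial m := by
    exact_mod_cast (Nat.pow_le_pow_left n.le_succ m).trans (Nat.pow_succ_le_ascFactorial _ m)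
  have hterm : ∀ k, p ^ m * (binomialWeight n p k / (k + 1).ascFactorial m)
      = binomialWeight (n + m) p (k + m) / (n + 1).ascFactorial m := fun k ↦ by
    rw [mul_div_assoc', div_eq_div_iff (hasc k).ne' (hasc n).ne']
    linear_combination binomialWeight_mul_pow_mul_ascFactorial n m k p
  calc (n * p) ^ m * ∑ k ∈ range (n + 1), binomialWeight n p k / (k + 1).ascFactorial m
      = (n : ℝ) ^ m / (n + 1).ascFactorial m
          * ∑ k ∈ range (n + 1), binomialWeight (n + m) p (k + m) := by
        rw [mul_pow, mul_assoc, mul_sum]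
        simp only [hterm]
        rw [← sum_div]
        ring
    _ ≤ 1 * 1 := by
        gcongr
        · exact sum_nonneg fun k _ ↦ binomialWeight_nonneg hp₀ hp₁ _
        · exact div_le_one_of_le₀ hpow (hasc n).le
        · exact sum_binomialWeight_add_le hp₀ hp₁ m
    _ = 1 := one_mul 1

lemma pow_mul_sum_binomialWeight_lt_le (hp₀ : 0 ≤ p) (hp₁ : p ≤ 1) (j : ℕ) {K : ℝ}
    (hK : 0 ≤ K) :
    (n * p) ^ j * ∑ k ∈ range (n + 1) with (k : ℕ) < K, binomialWeight n p k ≤ (K + j) ^ j := by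
  have hterm : ∀ k : ℕ, (k : ℝ) < K →
      binomialWeight n p k ≤ (K + j) ^ j * (binomialWeight n p k / (k + 1).ascFactorial j) := by
    intro k hk
    have hasc : (0 : ℝ) < (k + 1).ascFactorial j := by exact_mod_cast Nat.ascFactorial_pos k j
    have hle : ((k + 1).ascFactorial j : ℝ) ≤ (K + j) ^ j := by
      calc ((k + 1).ascFactorial j : ℝ) ≤ ((k + j : ℕ) : ℝ) ^ j := by
            exact_mod_cast Nat.ascFactorial_le_pow_add k j
        _ ≤ (K + j) ^ j := by
            push_cast
            gcongr
    rw [mul_div_assoc', le_div_iff₀ hasc, mul_comm _ (binomialWeight n p k)]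
    exact mul_le_mul_of_nonneg_left hle (binomialWeight_nonneg hp₀ hp₁ k)
  calc (n * p) ^ j * ∑ k ∈ range (n + 1) with (k : ℕ) < K, binomialWeight n p k
      ≤ (n * p) ^ j * ((K + j) ^ j
          * ∑ k ∈ range (n + 1), binomialWeight n p k / (k + 1).ascFactorial j) := by
        refine mul_le_mul_of_nonneg_left ?_ (by positivity)
        rw [mul_sum]
        refine (sum_le_sum fun k hk ↦ hterm k (mem_filter.1 hk).2).trans
          (sum_le_sum_of_subset_of_nonneg (filter_subset _ _) ?_)
        intro k _ _
        have := binomialWeight_nonneg hp₀ hp₁ (n := n) k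
        positivity
    _ = (K + j) ^ j * ((n * p) ^ j
          * ∑ k ∈ range (n + 1), binomialWeight n p k / (k + 1).ascFactorial j) := by ring
    _ ≤ (K + j) ^ j * 1 := by
        gcongr
        exact pow_mul_sum_binomialWeight_div_ascFactorial_le hp₀ hp₁ j
    _ = (K + j) ^ j := mul_one _

lemma pow_mul_sum_binomialWeight_lt_le_of_sq_le (hp₀ : 0 ≤ p) (hp₁ : p ≤ 1) {K : ℝ} (hK : 0 < K)
    (hKM : K ^ 2 ≤ n * p) (m : ℕ) :
    (n * p) ^ m * ∑ k ∈ range (n + 1) with (k : ℕ) < K, binomialWeight n p k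
      ≤ (1 + (2 * m + 1) / K) ^ (2 * m + 1) / K := by
  set M := (n : ℝ) * p
  set T := ∑ k ∈ range (n + 1) with (k : ℕ) < K, binomialWeight n p k
  have hT : M ^ (2 * m + 1) * T ≤ (K + (2 * m + 1)) ^ (2 * m + 1) := by
    exact_mod_cast pow_mul_sum_binomialWeight_lt_le hp₀ hp₁ (2 * m + 1) hK.le
  have hT₀ : 0 ≤ T := sum_nonneg fun k _ ↦ binomialWeight_nonneg hp₀ hp₁ k
  have hKM' : M ^ m * T * (K ^ 2) ^ (m + 1) ≤ (K + (2 * m + 1)) ^ (2 * m + 1) :=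
    calc M ^ m * T * (K ^ 2) ^ (m + 1) ≤ M ^ m * T * M ^ (m + 1) := by gcongr
      _ = M ^ (2 * m + 1) * T := by ring
      _ ≤ _ := hT
  calc M ^ m * T ≤ (K + (2 * m + 1)) ^ (2 * m + 1) / (K ^ 2) ^ (m + 1) :=
        (le_div_iff₀ (by positivity)).2 hKM'
    _ = (1 + (2 * m + 1) / K) ^ (2 * m + 1) / K := by
        rw [one_add_div hK.ne', div_pow, div_div, ← pow_succ, ← pow_mul]
        ring

end BinomialWeight

lemma inv_add_pow_le_div_ascFactorial {b K : ℝ} (hb : 0 < b) (hK : 0 < K) {k : ℕ}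
    (hk : K ≤ k) (m : ℕ) : ((b + k) ^ m)⁻¹ ≤ (1 + m / K) ^ m / (k + 1).ascFactorial m := by
  have hkm : (k : ℝ) + m ≤ (1 + m / K) * (b + k) := by
    have : (m : ℝ) ≤ m / K * k := by
      rw [div_mul_eq_mul_div, le_div_iff₀ hK]
      exact mul_le_mul_of_nonneg_left hk (Nat.cast_nonneg m)
    nlinarith [div_nonneg (Nat.cast_nonneg m) hK.le]
  rw [inv_le_comm₀ (by positivity) (by positivity), inv_div, div_le_iff₀ (by positivity)]
  calc ((k + 1).ascFactorial m : ℝ) ≤ ((k + m : ℕ) : ℝ) ^ m := by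
        exact_mod_cast Nat.ascFactorial_le_pow_add k m
    _ ≤ ((1 + m / K) * (b + k)) ^ m := by
        push_cast
        gcongr
    _ = (b + k) ^ m * (1 + m / K) ^ m := by rw [mul_pow, mul_comm]

lemma convexOn_rpow_of_nonpos {s : ℝ} (hs : s ≤ 0) : ConvexOn ℝ (Set.Ioi 0) fun x : ℝ ↦ x ^ s := by
  refine MonotoneOn.convexOn_of_deriv (convex_Ioi 0)
    (fun x hx ↦ (Real.continuousAt_rpow_const x s (Or.inl (ne_of_gt hx))).continuousWithinAt)
    (fun x hx ↦ ?_) ?_ <;> rw [interior_Ioi] at *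
  · exact (Real.hasDerivAt_rpow_const (Or.inl (ne_of_gt hx))).differentiableAt
      |>.differentiableWithinAt
  · intro x hx y _ hxy
    simp only [Real.deriv_rpow_const]
    exact mul_le_mul_of_nonpos_left (Real.rpow_le_rpow_of_nonpos hx hxy (by linarith)) hs

noncomputable def invPowMomentBound (b : ℝ) (m : ℕ) (K : ℝ) : ℝ :=
  (1 + m / K) ^ m + (1 + (2 * m + 1) / K) ^ (2 * m + 1) / (b ^ m * K)

section BinomialMoments

variable {n : ℕ} {p b : ℝ}

lemma pow_mul_sum_binomialWeight_mul_inv_pow_le (hp₀ : 0 ≤ p) (hp₁ : p ≤ 1) (hb : 0 < b) {K : ℝ}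
    (hK : 0 < K) (hKM : K ^ 2 ≤ n * p) (m : ℕ) :
    (n * p) ^ m * ∑ k ∈ range (n + 1), binomialWeight n p k * ((b + k) ^ m)⁻¹
      ≤ invPowMomentBound b m K := by
  set M := (n : ℝ) * p
  have hw := binomialWeight_nonneg (n := n) hp₀ hp₁
  have hfar : ∑ k ∈ range (n + 1) with ¬ (k : ℕ) < K, binomialWeight n p k * ((b + k) ^ m)⁻¹
      ≤ (1 + m / K) ^ m * ∑ k ∈ range (n + 1), binomialWeight n p k / (k + 1).ascFactorial m := by
    rw [mul_sum]
    refine (sum_le_sum fun k hk ↦ ?_).trans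
      (sum_le_sum_of_subset_of_nonneg (filter_subset _ _) fun k _ _ ↦
        mul_nonneg (by positivity) (div_nonneg (hw k) (by positivity)))
    rw [mul_div_left_comm]
    exact mul_le_mul_of_nonneg_left
      (inv_add_pow_le_div_ascFactorial hb hK (not_lt.1 (mem_filter.1 hk).2) m) (hw k)
  have hnear : ∑ k ∈ range (n + 1) with (k : ℕ) < K, binomialWeight n p k * ((b + k) ^ m)⁻¹
      ≤ (b ^ m)⁻¹ * ∑ k ∈ range (n + 1) with (k : ℕ) < K, binomialWeight n p k := by
    rw [mul_sum]
    refine sum_le_sum fun k _ ↦ ?_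
    rw [mul_comm]
    gcongr
    · exact hw k
    · exact le_add_of_nonneg_right k.cast_nonneg
  rw [← sum_filter_add_sum_filter_not (range (n + 1)) (fun k : ℕ ↦ (k : ℝ) < K)]
  calc M ^ m * (∑ k ∈ range (n + 1) with (k : ℕ) < K, binomialWeight n p k * ((b + k) ^ m)⁻¹
        + ∑ k ∈ range (n + 1) with ¬ (k : ℕ) < K, binomialWeight n p k * ((b + k) ^ m)⁻¹)
      ≤ M ^ m * ((b ^ m)⁻¹ * ∑ k ∈ range (n + 1) with (k : ℕ) < K, binomialWeight n p k
          + (1 + m / K) ^ m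
            * ∑ k ∈ range (n + 1), binomialWeight n p k / (k + 1).ascFactorial m) := by
        gcongr
    _ = (b ^ m)⁻¹ * (M ^ m * ∑ k ∈ range (n + 1) with (k : ℕ) < K, binomialWeight n p k)
          + (1 + m / K) ^ m
            * (M ^ m * ∑ k ∈ range (n + 1), binomialWeight n p k / (k + 1).ascFactorial m) := by
        ring
    _ ≤ (b ^ m)⁻¹ * ((1 + (2 * m + 1) / K) ^ (2 * m + 1) / K) + (1 + m / K) ^ m * 1 := by
        gcongr
        · exact pow_mul_sum_binomialWeight_lt_le_of_sq_le hp₀ hp₁ hK hKM m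
        · exact pow_mul_sum_binomialWeight_div_ascFactorial_le hp₀ hp₁ m
    _ = invPowMomentBound b m K := by rw [invPowMomentBound]; ring

lemma add_mul_rpow_le_sum_binomialWeight_mul_rpow (hp₀ : 0 ≤ p) (hp₁ : p ≤ 1) (hb : 0 < b)
    {s : ℝ} (hs : s ≤ 0) :
    (b + n * p) ^ s ≤ ∑ k ∈ range (n + 1), binomialWeight n p k * (b + k) ^ s := by
  have hmean : ∑ k ∈ range (n + 1), binomialWeight n p k * (b + k) = b + n * p := by
    simp only [mul_add, sum_add_distrib, ← sum_mul, sum_binomialWeight, one_mul,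
      sum_binomialWeight_mul_self]
  have h := (convexOn_rpow_of_nonpos hs).map_sum_le (t := range (n + 1))
    (w := binomialWeight n p) (p := fun k ↦ b + k)
    (fun k _ ↦ binomialWeight_nonneg hp₀ hp₁ k) (sum_binomialWeight n p)
    (fun k _ ↦ show 0 < b + k by positivity)
  simpa only [smul_eq_mul, hmean] using h

lemma sum_binomialWeight_mul_rpow_neg_le (hp₀ : 0 ≤ p) (hp₁ : p ≤ 1) (hb : 0 < b) {α : ℝ}
    (hα : 0 < α) {m : ℕ} (hαm : α ≤ m) :
    ∑ k ∈ range (n + 1), binomialWeight n p k * (b + k) ^ (-α)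
      ≤ (∑ k ∈ range (n + 1), binomialWeight n p k * ((b + k) ^ m)⁻¹) ^ (α / m) := by
  have h := Real.arith_mean_le_rpow_mean (range (n + 1)) (binomialWeight n p)
    (fun k ↦ (b + k) ^ (-α)) (fun k _ ↦ binomialWeight_nonneg hp₀ hp₁ k) (sum_binomialWeight n p)
    (fun k _ ↦ by positivity) ((one_le_div hα).2 hαm)
  have hz : ∀ k : ℕ, ((b + k) ^ (-α)) ^ (m / α) = ((b + k) ^ m)⁻¹ := fun k ↦ by
    rw [← Real.rpow_mul (by positivity), show -α * (m / α) = -(m : ℝ) by field_simp,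
      Real.rpow_neg (by positivity), Real.rpow_natCast]
  simpa only [hz, one_div_div] using h

lemma div_add_rpow_le_rpow_mul_sum_binomialWeight (hp₀ : 0 ≤ p) (hp₁ : p ≤ 1) (hb : 0 < b)
    {α : ℝ} (hα : 0 ≤ α) :
    (n * p / (b + n * p)) ^ α
      ≤ (n * p) ^ α * ∑ k ∈ range (n + 1), binomialWeight n p k * (b + k) ^ (-α) := by
  have hM : (0 : ℝ) ≤ n * p := by positivity
  rw [Real.div_rpow hM (by positivity), div_eq_mul_inv, ← Real.rpow_neg (by positivity)]
  gcongr
  exact add_mul_rpow_le_sum_binomialWeight_mul_rpow hp₀ hp₁ hb (neg_nonpos.2 hα)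

lemma rpow_mul_sum_binomialWeight_le (hp₀ : 0 ≤ p) (hp₁ : p ≤ 1) (hb : 0 < b) {α K : ℝ}
    (hα : 0 < α) {m : ℕ} (hαm : α ≤ m) (hK : 0 < K) (hKM : K ^ 2 ≤ n * p) :
    (n * p) ^ α * ∑ k ∈ range (n + 1), binomialWeight n p k * (b + k) ^ (-α)
      ≤ invPowMomentBound b m K ^ (α / m) := by
  have hM : (0 : ℝ) ≤ n * p := (sq_nonneg K).trans hKM
  have hm : (0 : ℝ) < m := hα.trans_le hαm
  have hSm : 0 ≤ ∑ k ∈ range (n + 1), binomialWeight n p k * ((b + k) ^ m)⁻¹ :=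
    sum_nonneg fun k _ ↦ mul_nonneg (binomialWeight_nonneg hp₀ hp₁ k) (by positivity)
  calc (n * p) ^ α * ∑ k ∈ range (n + 1), binomialWeight n p k * (b + k) ^ (-α)
      ≤ ((n * p) ^ m) ^ (α / m)
          * (∑ k ∈ range (n + 1), binomialWeight n p k * ((b + k) ^ m)⁻¹) ^ (α / m) := by
        rw [← Real.rpow_natCast, ← Real.rpow_mul hM, mul_div_cancel₀ _ hm.ne']
        gcongr
        exact sum_binomialWeight_mul_rpow_neg_le hp₀ hp₁ hb hα hαm
    _ = ((n * p) ^ m * ∑ k ∈ range (n + 1), binomialWeight n p k * ((b + k) ^ m)⁻¹) ^ (α / m) :=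
        (Real.mul_rpow (by positivity) hSm).symm
    _ ≤ _ := by
        gcongr
        exact pow_mul_sum_binomialWeight_mul_inv_pow_le hp₀ hp₁ hb hK hKM m

end BinomialMoments

lemma IsBinomial.integral_eq_sum {μ : Measure ℕ} {n : ℕ} {p : ℝ} (hμ : IsBinomial μ n p)
    (hp₀ : 0 ≤ p) (hp₁ : p ≤ 1) (f : ℕ → ℝ) :
    ∫ x, f x ∂μ = ∑ k ∈ range (n + 1), binomialWeight n p k * f k := by
  have : μ = ProbabilityTheory.binomial n ⟨p, hp₀, hp₁⟩ :=
    Measure.ext_of_singleton fun k ↦ by rw [hμ.2, ProbabilityTheory.binomial_singleton]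
  rw [this, ProbabilityTheory.integral_binomial, ← Nat.range_succ_eq_Iic]
  rfl

lemma tendsto_div_add_rpow_atTop (b α : ℝ) :
    Tendsto (fun x : ℝ ↦ (x / (b + x)) ^ α) atTop (nhds 1) := by
  have h : Tendsto (fun x : ℝ ↦ (b / x + 1)⁻¹) atTop (nhds 1) := by
    simpa using
      (((tendsto_const_nhds (x := b)).div_atTop tendsto_id).add_const 1).inv₀ (by norm_num)
  have h' : Tendsto (fun x : ℝ ↦ x / (b + x)) atTop (nhds 1) := by
    refine h.congr' ((eventually_gt_atTop 0).mono fun x hx ↦ ?_)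
    field_simp
  simpa using h'.rpow_const (Or.inl one_ne_zero)

lemma tendsto_invPowMomentBound_rpow_atTop {b : ℝ} (hb : 0 < b) (m : ℕ) (q : ℝ) :
    Tendsto (fun K : ℝ ↦ invPowMomentBound b m K ^ q) atTop (nhds 1) := by
  have hc : ∀ c : ℝ, Tendsto (fun K : ℝ ↦ (1 + c / K)) atTop (nhds 1) := fun c ↦ by
    simpa using ((tendsto_const_nhds (x := c)).div_atTop tendsto_id).const_add 1
  have h := ((hc m).pow m).add
    (((hc (2 * m + 1)).pow (2 * m + 1)).div_atTop (tendsto_id.const_mul_atTop (pow_pos hb m)))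
  simpa [invPowMomentBound] using
    (h.rpow_const (Or.inl (by norm_num)) : Tendsto _ atTop (nhds (((1 : ℝ) ^ m + 0) ^ q)))

/-- If `X_n ~ Bin(n, p_n)` with `n p_n → ∞`, then for fixed `b > 0` and `α > 0`,
`E[1/(b + X_n)^α] = (1 + o(1))/(n p_n)^α`, i.e. `(n p_n)^α E[1/(b + X_n)^α] → 1`. -/
theorem binomial_inverse_moment_asymptotic (p : ℕ → ℝ) (hp : ∀ n, p n ∈ Set.Ioo (0 : ℝ) 1)
    (μ : ℕ → Measure ℕ) (hμ : ∀ n, IsBinomial (μ n) n (p n))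
    (hnp : Tendsto (fun n : ℕ => (n : ℝ) * p n) atTop atTop)
    (b α : ℝ) (hb : 0 < b) (hα : 0 < α) :
    Tendsto (fun n : ℕ =>
        ((n : ℝ) * p n) ^ α * ∫ x, 1 / (b + (x : ℝ)) ^ α ∂(μ n))
      atTop (nhds 1) := by
  have hp₀ n : 0 ≤ p n := (hp n).1.le
  have hp₁ n : p n ≤ 1 := (hp n).2.le
  have hint n : ∫ x, 1 / (b + (x : ℝ)) ^ α ∂(μ n)
      = ∑ k ∈ range (n + 1), binomialWeight n (p n) k * (b + k) ^ (-α) := by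
    rw [(hμ n).integral_eq_sum (hp₀ n) (hp₁ n)]
    refine sum_congr rfl fun k _ ↦ ?_
    rw [one_div, Real.rpow_neg (by positivity)]
  simp only [hint]
  refine tendsto_of_tendsto_of_tendsto_of_le_of_le' ((tendsto_div_add_rpow_atTop b α).comp hnp)
    ((tendsto_invPowMomentBound_rpow_atTop hb ⌈α⌉₊ (α / ⌈α⌉₊)).comp
      (Real.tendsto_sqrt_atTop.comp hnp))
    (Eventually.of_forall fun n ↦
      div_add_rpow_le_rpow_mul_sum_binomialWeight (hp₀ n) (hp₁ n) hb hα.le) ?_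
  filter_upwards [hnp.eventually_gt_atTop 0] with n hn
  exact rpow_mul_sum_binomialWeight_le (hp₀ n) (hp₁ n) hb hα (Nat.le_ceil α)
    (Real.sqrt_pos.2 hn) (Real.sq_sqrt hn.le).le
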